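/- arXiv:2410.11405 — 7 statements merged into one kernel-verified Lean document; each statement's English description precedes it below -/
import Mathlib

section
/- Coherence modulo from convergence modulo: Let S be a category with localisation P = S^⊤, E ⊆ S a wide subgroupoid, and ≡ an abstract equivalence on S ∪ E^⊤. If S is ≡-convergent modulo E (terminating modulo E and ≡-confluent), then P is ≡-coherent modulo E: every endomorphism f: x → x in P satisfies f ≡ g⁻¹ ∘ e ∘ g for some morphism g: x → y in S and some endomorphism e: y → y in E. -/
open CategoryTheory

/-- The class of morphisms of a groupoid generated by a given class `S` under
identities, composition and inverses.  The hypothesis `∀ f, GenClass S f`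
expresses that the ambient groupoid `P` is the localisation `S^⊤` of `S`. -/
inductive GenClass {P : Type*} [Groupoid P] (S : ∀ x y : P, (x ⟶ y) → Prop) :
    ∀ x y : P, (x ⟶ y) → Prop
  | of {x y : P} (f : x ⟶ y) : S x y f → GenClass S x y f
  | id (x : P) : GenClass S x x (𝟙 x)
  | comp {x y z : P} {f : x ⟶ y} {g : y ⟶ z} :
      GenClass S x y f → GenClass S y z g → GenClass S x z (f ≫ g)
  | inv {x y : P} {f : x ⟶ y} : GenClass S x y f → GenClass S y x (Groupoid.inv f)

/-- **Coherence modulo from convergence modulo.**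
`P` is a groupoid (the localisation `S^⊤`), `S` a class of morphisms closed
under identities and composition (the category of rewriting sequences)
generating `P`, `E ⊆ S` a wide subgroupoid, and `equiv` an abstract
equivalence on parallel morphisms, compatible with composition and inverses.
If `S` is terminating modulo `E` and `equiv`-confluent, then `P` is
`equiv`-coherent modulo `E`: every endomorphism `f : x ⟶ x` of `P` satisfies
`f ≡ g⁻¹ ∘ e ∘ g` for some `S`-morphism `g : x ⟶ y` and `E`-endomorphism
`e : y ⟶ y`. -/
theorem stmt2 {P : Type*} [Groupoid P]
    (S E : ∀ x y : P, (x ⟶ y) → Prop)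
    (equiv : ∀ x y : P, (x ⟶ y) → (x ⟶ y) → Prop)
    (hrefl : ∀ x y (f : x ⟶ y), equiv x y f f)
    (hsymm : ∀ x y (f g : x ⟶ y), equiv x y f g → equiv x y g f)
    (htrans : ∀ x y (f g h : x ⟶ y), equiv x y f g → equiv x y g h → equiv x y f h)
    (hcompat : ∀ w x y z (a : w ⟶ x) (f g : x ⟶ y) (b : y ⟶ z),
      equiv x y f g → equiv w z (a ≫ f ≫ b) (a ≫ g ≫ b))
    (hinv : ∀ x y (f g : x ⟶ y), equiv x y f g →
      equiv y x (Groupoid.inv f) (Groupoid.inv g))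
    (hSid : ∀ x : P, S x x (𝟙 x))
    (hScomp : ∀ x y z (f : x ⟶ y) (g : y ⟶ z), S x y f → S y z g → S x z (f ≫ g))
    (hES : ∀ x y (f : x ⟶ y), E x y f → S x y f)
    (hEid : ∀ x : P, E x x (𝟙 x))
    (hEcomp : ∀ x y z (f : x ⟶ y) (g : y ⟶ z), E x y f → E y z g → E x z (f ≫ g))
    (hEinv : ∀ x y (f : x ⟶ y), E x y f → E y x (Groupoid.inv f))
    (hgen : ∀ x y (f : x ⟶ y), GenClass S x y f)
    (hterm : ∀ (obj : ℕ → P) (f : ∀ n, obj n ⟶ obj (n + 1)),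
      (∀ n, S _ _ (f n)) → ∃ N, ∀ n, N ≤ n → E _ _ (f n))
    (hconf : ∀ x y y' (f : x ⟶ y) (f' : x ⟶ y'), S x y f → S x y' f' →
      ∃ (z : P) (g : y ⟶ z) (g' : y' ⟶ z),
        S y z g ∧ S y' z g' ∧ equiv x z (f ≫ g) (f' ≫ g')) :
    ∀ (x : P) (f : x ⟶ x), ∃ (y : P) (g : x ⟶ y) (e : y ⟶ y),
      S x y g ∧ E y y e ∧ equiv x x f (g ≫ e ≫ Groupoid.inv g) := by
  classical
  -- equality implies equivalence
  have heq : ∀ {a b : P} {f g : a ⟶ b}, f = g → equiv a b f g := by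
    intro a b f g h; rw [h]; exact hrefl _ _ _
  -- whiskering helpers
  have wl : ∀ {a b c : P} (p : a ⟶ b) {f g : b ⟶ c}, equiv b c f g →
      equiv a c (p ≫ f) (p ≫ g) := by
    intro a b c p f g h
    have := hcompat a b c c p f g (𝟙 c) h
    simpa using this
  have wr : ∀ {a b c : P} {f g : a ⟶ b} (p : b ⟶ c), equiv a b f g →
      equiv a c (f ≫ p) (g ≫ p) := by
    intro a b c f g p h
    have := hcompat a a b c (𝟙 a) f g p h
    simpa using this
  -- the termination order
  set r : P → P → Prop := fun b a => ∃ f : a ⟶ b, S a b f ∧ ¬ E a b f with hr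
  have hwf : WellFounded r := by
    by_contra hnwf
    have hex : ∃ a, ¬ Acc r a := by
      by_contra h'
      push_neg at h'
      exact hnwf ⟨h'⟩
    have step : ∀ b, ¬ Acc r b → ∃ c, r c b ∧ ¬ Acc r c := by
      intro b hb
      by_contra hc
      push_neg at hc
      exact hb (Acc.intro b fun c hcb => hc c hcb)
    obtain ⟨a, ha⟩ := hex
    -- build a descending sequence
    let seq : ℕ → {b : P // ¬ Acc r b} := fun n =>
      Nat.rec ⟨a, ha⟩ (fun _ p =>
        ⟨(step p.1 p.2).choose, (step p.1 p.2).choose_spec.2⟩) n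
    have hseq : ∀ n, r (seq (n + 1)).1 (seq n).1 := fun n =>
      (step (seq n).1 (seq n).2).choose_spec.1
    let obj : ℕ → P := fun n => (seq n).1
    let f : ∀ n, obj n ⟶ obj (n + 1) := fun n => (hseq n).choose
    have hf : ∀ n, S _ _ (f n) ∧ ¬ E _ _ (f n) := fun n => (hseq n).choose_spec
    obtain ⟨N, hN⟩ := hterm obj f (fun n => (hf n).1)
    exact (hf N).2 (hN N le_rfl)
  -- Key lemma: a coterminal pair of `S`-morphisms gives a coherent loop.
  have key : ∀ z : P, ∀ (w : P) (u v : z ⟶ w), S z w u → S z w v →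
      ∃ (y : P) (g : z ⟶ y) (e : y ⟶ y), S z y g ∧ E y y e ∧
        equiv z z (v ≫ Groupoid.inv u) (g ≫ e ≫ Groupoid.inv g) := by
    intro z
    induction z using hwf.induction with
    | _ z IH =>
    intro w u v hu hv
    by_cases hEu : E z w u
    · by_cases hEv : E z w v
      · exact ⟨z, 𝟙 z, v ≫ Groupoid.inv u, hSid z,
          hEcomp _ _ _ _ _ hEv (hEinv _ _ _ hEu), heq (by simp)⟩
      · -- `u ∈ E`, `v ∉ E` : descend along `v`
        obtain ⟨t, p, q, hp, hq, he⟩ := hconf z w w v u hv hu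
        obtain ⟨y, g, e, hg, hee, hgeq⟩ := IH w ⟨v, hv, hEv⟩ t p q hp hq
        refine ⟨y, v ≫ g, e, hScomp _ _ _ _ _ hv hg, hee, ?_⟩
        -- first: u ≫ inv v ≡ v ≫ (p ≫ inv q) ≫ inv v
        have h1 : equiv z z (u ≫ Groupoid.inv v)
            (v ≫ (p ≫ Groupoid.inv q) ≫ Groupoid.inv v) := by
          refine htrans _ _ _ _ _ (heq (show u ≫ Groupoid.inv v =
            (u ≫ q) ≫ (Groupoid.inv q ≫ Groupoid.inv v) by simp)) ?_
          refine htrans _ _ _ _ _ (wr _ (hsymm _ _ _ _ he)) (heq ?_)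
          simp
        -- invert: v ≫ inv u ≡ v ≫ (q ≫ inv p) ≫ inv v
        have h2 : equiv z z (v ≫ Groupoid.inv u)
            (v ≫ (q ≫ Groupoid.inv p) ≫ Groupoid.inv v) := by
          have := hinv _ _ _ _ h1
          refine htrans _ _ _ _ _ (heq ?_) (htrans _ _ _ _ _ this (heq ?_)) <;> simp
        refine htrans _ _ _ _ _ h2 ?_
        refine htrans _ _ _ _ _ (hcompat _ _ _ _ v _ _ (Groupoid.inv v) hgeq) (heq ?_)
        simp
    · -- `u ∉ E` : descend along `u`
      obtain ⟨t, p, q, hp, hq, he⟩ := hconf z w w u v hu hv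
      obtain ⟨y, g, e, hg, hee, hgeq⟩ := IH w ⟨u, hu, hEu⟩ t q p hq hp
      refine ⟨y, u ≫ g, e, hScomp _ _ _ _ _ hu hg, hee, ?_⟩
      -- v ≫ inv u ≡ u ≫ (p ≫ inv q) ≫ inv u
      have h1 : equiv z z (v ≫ Groupoid.inv u)
          (u ≫ (p ≫ Groupoid.inv q) ≫ Groupoid.inv u) := by
        refine htrans _ _ _ _ _ (heq (show v ≫ Groupoid.inv u =
          (v ≫ q) ≫ (Groupoid.inv q ≫ Groupoid.inv u) by simp)) ?_
        refine htrans _ _ _ _ _ (wr _ (hsymm _ _ _ _ he)) (heq ?_)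
        simp
      refine htrans _ _ _ _ _ h1 ?_
      refine htrans _ _ _ _ _ (hcompat _ _ _ _ u _ _ (Groupoid.inv u) hgeq) (heq ?_)
      simp
  -- Church–Rosser: every morphism of `P` is equivalent to a valley.
  have CR : ∀ (x y : P) (f : x ⟶ y), ∃ (z : P) (s : x ⟶ z) (t : y ⟶ z),
      S x z s ∧ S y z t ∧ equiv x y f (s ≫ Groupoid.inv t) := by
    intro x y f
    induction hgen x y f with
    | of f hf => exact ⟨_, f, 𝟙 _, hf, hSid _, heq (by simp)⟩
    | id x => exact ⟨x, 𝟙 x, 𝟙 x, hSid x, hSid x, heq (by simp)⟩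
    | @comp x y z f g _ _ ihf ihg =>
      obtain ⟨a, s, t, hs, ht, hf'⟩ := ihf
      obtain ⟨b, s', t', hs', ht', hg'⟩ := ihg
      obtain ⟨c, p, q, hp, hq, he⟩ := hconf y a b t s' ht hs'
      refine ⟨c, s ≫ p, t' ≫ q, hScomp _ _ _ _ _ hs hp, hScomp _ _ _ _ _ ht' hq, ?_⟩
      have h0 : equiv x z (f ≫ g) ((s ≫ Groupoid.inv t) ≫ (s' ≫ Groupoid.inv t')) :=
        htrans _ _ _ _ _ (wr _ hf') (wl _ hg')
      have h1 : equiv a b (Groupoid.inv t ≫ s') ((p ≫ Groupoid.inv q)) := by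
        refine htrans _ _ _ _ _ (heq (show Groupoid.inv t ≫ s' =
          Groupoid.inv t ≫ (s' ≫ q) ≫ Groupoid.inv q by simp)) ?_
        refine htrans _ _ _ _ _
          (hcompat _ _ _ _ (Groupoid.inv t) _ _ (Groupoid.inv q) (hsymm _ _ _ _ he))
          (heq ?_)
        simp
      refine htrans _ _ _ _ _ h0 ?_
      refine htrans _ _ _ _ _ (heq (show (s ≫ Groupoid.inv t) ≫ (s' ≫ Groupoid.inv t') =
        s ≫ (Groupoid.inv t ≫ s') ≫ Groupoid.inv t' by simp)) ?_
      refine htrans _ _ _ _ _ (hcompat _ _ _ _ s _ _ (Groupoid.inv t') h1) (heq ?_)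
      simp
    | @inv x y f _ ihf =>
      obtain ⟨a, s, t, hs, ht, hf'⟩ := ihf
      refine ⟨a, t, s, ht, hs, ?_⟩
      have := hinv _ _ _ _ hf'
      refine htrans _ _ _ _ _ this (heq ?_)
      simp
  -- conclusion
  intro x f
  obtain ⟨z, s, t, hs, ht, hf⟩ := CR x x f
  obtain ⟨w, u, v, hu, hv, he⟩ := hconf x z z s t hs ht
  obtain ⟨y, g, e, hg, hee, hq⟩ := key z w u v hu hv
  refine ⟨y, t ≫ g, e, hScomp _ _ _ _ _ ht hg, hee, ?_⟩
  refine htrans _ _ _ _ _ hf ?_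
  -- s ≫ inv t ≡ t ≫ (v ≫ inv u) ≫ inv t
  have h1 : equiv x x (s ≫ Groupoid.inv t)
      (t ≫ (v ≫ Groupoid.inv u) ≫ Groupoid.inv t) := by
    refine htrans _ _ _ _ _ (heq (show s ≫ Groupoid.inv t =
      (s ≫ u) ≫ (Groupoid.inv u ≫ Groupoid.inv t) by simp)) ?_
    refine htrans _ _ _ _ _ (wr _ he) (heq ?_)
    simp
  refine htrans _ _ _ _ _ h1 ?_
  refine htrans _ _ _ _ _ (hcompat _ _ _ _ t _ _ (Groupoid.inv t) hq) (heq ?_)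
  simp
end

section
/- Newmann's lemma modulo: Let S = (R, E) be an abstract rewriting system modulo with equivalence ≡. If S is terminating modulo E and every local branching (pair of coinitial S-rewriting steps) is ≡-confluent, then S is ≡-confluent (every branching of S-rewriting sequences is ≡-confluent). -/
/-- An `S`-rewriting step of the abstract rewriting system modulo `S = (R, E)`:
a composite `e' ∘ r ∘ e` with `r ∈ R` and `e, e' ∈ E^⊤`. -/
def SStep {X : Type*} (R E : X → X → Prop) (x y : X) : Prop :=
  ∃ a b, Relation.EqvGen E x a ∧ R a b ∧ Relation.EqvGen E b y

/-- An `S`-rewriting sequence: either an `E`-congruence (length zero) or a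
nonempty composite of `S`-rewriting steps. -/
def SSeq {X : Type*} (R E : X → X → Prop) (x y : X) : Prop :=
  Relation.EqvGen E x y ∨ Relation.TransGen (SStep R E) x y

namespace NewmanAux

variable {X : Type*} {R E : X → X → Prop}

lemma step_comp_left {x x' y : X} (e : Relation.EqvGen E x x') (h : SStep R E x' y) :
    SStep R E x y := by
  obtain ⟨a, b, e1, r, e2⟩ := h
  exact ⟨a, b, e.trans _ _ _ e1, r, e2⟩

lemma step_comp_right {x y y' : X} (h : SStep R E x y) (e : Relation.EqvGen E y y') :
    SStep R E x y' := by
  obtain ⟨a, b, e1, r, e2⟩ := h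
  exact ⟨a, b, e1, r, e2.trans _ _ _ e⟩

lemma tg_comp_left {x x' y : X} (e : Relation.EqvGen E x x')
    (h : Relation.TransGen (SStep R E) x' y) : Relation.TransGen (SStep R E) x y := by
  obtain ⟨c, h1, h2⟩ := Relation.TransGen.head'_iff.mp h
  rcases Relation.reflTransGen_iff_eq_or_transGen.mp h2 with rfl | t
  · exact Relation.TransGen.single (step_comp_left e h1)
  · exact Relation.TransGen.head (step_comp_left e h1) t

lemma tg_comp_right {x y y' : X} (h : Relation.TransGen (SStep R E) x y)
    (e : Relation.EqvGen E y y') : Relation.TransGen (SStep R E) x y' := by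
  induction h with
  | single h1 => exact Relation.TransGen.single (step_comp_right h1 e)
  | tail h1 h2 _ => exact Relation.TransGen.tail h1 (step_comp_right h2 e)

lemma sseq_trans {x y z : X} (h1 : SSeq R E x y) (h2 : SSeq R E y z) : SSeq R E x z := by
  rcases h1 with e1 | t1 <;> rcases h2 with e2 | t2
  · exact Or.inl (e1.trans _ _ _ e2)
  · exact Or.inr (tg_comp_left e1 t2)
  · exact Or.inr (tg_comp_right t1 e2)
  · exact Or.inr (t1.trans t2)

lemma rtg_sseq {x y : X} (h : Relation.ReflTransGen (SStep R E) x y) : SSeq R E x y := by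
  rcases (Relation.reflTransGen_iff_eq_or_transGen.mp h) with rfl | t
  · exact Or.inl (Relation.EqvGen.refl _)
  · exact Or.inr t

end NewmanAux

/-- **Newmann's lemma modulo** (discrete abstract equivalence).
If the abstract rewriting system modulo `S = (R, E)` is terminating modulo `E`
(no infinite sequence of `S`-rewriting steps) and every local branching (pair
of coinitial `S`-rewriting steps) is confluent, then `S` is confluent: every
branching of `S`-rewriting sequences is confluent. -/
theorem stmt3 {X : Type*} (R E : X → X → Prop)
    (hterm : ¬ ∃ f : ℕ → X, ∀ n, SStep R E (f n) (f (n + 1)))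
    (hlocal : ∀ x y y', SStep R E x y → SStep R E x y' →
      ∃ z, SSeq R E y z ∧ SSeq R E y' z) :
    ∀ x y y', SSeq R E x y → SSeq R E x y' →
      ∃ z, SSeq R E y z ∧ SSeq R E y' z := by
  open NewmanAux in
  have hwf : WellFounded (fun a b => SStep R E b a) := by
    by_contra hw
    have hex : ∃ x, ¬ Acc (fun a b => SStep R E b a) x := by
      by_contra h
      push_neg at h
      exact hw ⟨h⟩
    obtain ⟨x0, hx0⟩ := hex
    have hstep : ∀ p : {x : X // ¬ Acc (fun a b => SStep R E b a) x},
        ∃ y : X, SStep R E p.1 y ∧ ¬ Acc (fun a b => SStep R E b a) y := by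
      rintro ⟨x, hx⟩
      by_contra h
      push_neg at h
      exact hx (Acc.intro x fun y hy => h y hy)
    let g : {x : X // ¬ Acc (fun a b => SStep R E b a) x} →
        {x : X // ¬ Acc (fun a b => SStep R E b a) x} :=
      fun p => ⟨(hstep p).choose, (hstep p).choose_spec.2⟩
    have hg : ∀ p, SStep R E p.1 (g p).1 := fun p => (hstep p).choose_spec.1
    refine hterm ⟨fun n => (g^[n] ⟨x0, hx0⟩).1, fun n => ?_⟩
    simp only [Function.iterate_succ_apply']
    exact hg _
  intro x
  induction x using hwf.induction with
  | _ x IH =>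
  intro y y' h1 h2
  rcases h1 with e1 | t1
  · rcases h2 with e2 | t2
    · exact ⟨y', Or.inl ((e1.symm _ _).trans _ _ _ e2), Or.inl (Relation.EqvGen.refl y')⟩
    · exact ⟨y', Or.inr (NewmanAux.tg_comp_left (e1.symm _ _) t2), Or.inl (Relation.EqvGen.refl y')⟩
  · rcases h2 with e2 | t2
    · exact ⟨y, Or.inl (Relation.EqvGen.refl y), Or.inr (NewmanAux.tg_comp_left (e2.symm _ _) t1)⟩
    · obtain ⟨a, ha, hay⟩ := Relation.TransGen.head'_iff.mp t1
      obtain ⟨b, hb, hby'⟩ := Relation.TransGen.head'_iff.mp t2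
      obtain ⟨c, hac, hbc⟩ := hlocal x a b ha hb
      obtain ⟨d, hyd, hcd⟩ := IH a ha y c (NewmanAux.rtg_sseq hay) hac
      obtain ⟨e, hde, hy'e⟩ := IH b hb d y'
        (NewmanAux.sseq_trans hbc hcd) (NewmanAux.rtg_sseq hby')
      exact ⟨e, NewmanAux.sseq_trans hyd hde, hy'e⟩
end

section
/- Tamed Newmann's lemma: Let S = (R, E; ≡) be an abstract rewriting system modulo on a set X, and ≻ a preorder on X compatible with S (meaning x →_S y implies x ≻ y) and invariant under E-congruence. If ≻ is terminating (well-founded) and every local S-branching with source x is ≻-tamely ≡-congruent (admits a ≡-congruence h between the two targets such that x ≻ z for every object z occurring along h), then S is ≡-confluent. -/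
/-- One step of an `S`-congruence (zigzag): a step, an inverse step, or an
`E`-congruence. -/
def ZigStep {X : Type*} (R E : X → X → Prop) (x y : X) : Prop :=
  SStep R E x y ∨ SStep R E y x ∨ Relation.EqvGen E x y

/-- The branching with targets `y, y'` and source `x` is `≻`-tamely
`S`-congruent: there is an `S`-congruence (zigzag) from `y` to `y'` all of
whose objects are dominated by `x` for the preorder `gt`. -/
def Tamed {X : Type*} (R E : X → X → Prop) (gt : X → X → Prop) (x y y' : X) : Prop :=
  ∃ (n : ℕ) (c : ℕ → X), c 0 = y ∧ c n = y' ∧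
    (∀ i < n, ZigStep R E (c i) (c (i + 1))) ∧ (∀ i ≤ n, gt x (c i))

section Helpers

variable {X : Type*} {R E : X → X → Prop} {x x' y y' z : X}

theorem sseq_refl (x : X) : SSeq R E x x := Or.inl (Relation.EqvGen.refl x)

theorem eqv_step (h : Relation.EqvGen E x x') (h' : SStep R E x' y) : SStep R E x y := by
  obtain ⟨a, b, h1, h2, h3⟩ := h'
  exact ⟨a, b, Relation.EqvGen.trans _ _ _ h h1, h2, h3⟩

theorem step_eqv (h : SStep R E x y) (h' : Relation.EqvGen E y y') : SStep R E x y' := by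
  obtain ⟨a, b, h1, h2, h3⟩ := h
  exact ⟨a, b, h1, h2, Relation.EqvGen.trans _ _ _ h3 h'⟩

theorem eqv_seq (h : Relation.EqvGen E x x') (h' : SSeq R E x' y) : SSeq R E x y := by
  rcases h' with h' | h'
  · exact Or.inl (Relation.EqvGen.trans _ _ _ h h')
  · obtain ⟨b, hb, hbc⟩ := Relation.TransGen.head'_iff.mp h'
    exact Or.inr (Relation.TransGen.head' (eqv_step h hb) hbc)

theorem seq_eqv (h : SSeq R E x y) (h' : Relation.EqvGen E y y') : SSeq R E x y' := by
  rcases h with h | h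
  · exact Or.inl (Relation.EqvGen.trans _ _ _ h h')
  · obtain ⟨b, hb, hbc⟩ := Relation.TransGen.tail'_iff.mp h
    exact Or.inr (Relation.TransGen.tail' hb (step_eqv hbc h'))

theorem seq_trans (h : SSeq R E x y) (h' : SSeq R E y z) : SSeq R E x z := by
  rcases h with h | h
  · exact eqv_seq h h'
  · rcases h' with h' | h'
    · exact seq_eqv (Or.inr h) h'
    · exact Or.inr (h.trans h')

theorem step_seq (h : SStep R E x y) : SSeq R E x y :=
  Or.inr (Relation.TransGen.single h)

theorem rtg_seq (h : Relation.ReflTransGen (SStep R E) x y) : SSeq R E x y := by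
  rcases Relation.reflTransGen_iff_eq_or_transGen.mp h with rfl | h
  · exact sseq_refl _
  · exact Or.inr h

end Helpers

/-- **Tamed Newmann's lemma.**
Let `S = (R, E)` be an abstract rewriting system modulo on `X` and `≻ = gt` a
preorder on `X` compatible with `S` (every `S`-rewriting step decreases) and
invariant under `E`-congruence.  If `≻` is terminating and every local
`S`-branching with source `x` is `≻`-tamely congruent, then `S` is confluent. -/
theorem stmt4 {X : Type*} (R E : X → X → Prop) (gt : X → X → Prop)
    (htrans : Transitive gt)
    (hEinv : ∀ x x' y y', Relation.EqvGen E x' x → gt x y → Relation.EqvGen E y y' →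
      gt x' y')
    (hcompat : ∀ x y, SStep R E x y → gt x y)
    (hterm : ¬ ∃ f : ℕ → X, ∀ n, gt (f n) (f (n + 1)))
    (hlocal : ∀ x y y', SStep R E x y → SStep R E x y' → Tamed R E gt x y y') :
    ∀ x y y', SSeq R E x y → SSeq R E x y' →
      ∃ z, SSeq R E y z ∧ SSeq R E y' z := by
  -- well-foundedness of the "smaller than" relation
  have hwf : WellFounded (fun a b : X => gt b a) := by
    by_contra hwf
    apply hterm
    have hex : ∃ a : X, ¬ Acc (fun a b : X => gt b a) a := by
      by_contra h
      push_neg at h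
      exact hwf ⟨h⟩
    obtain ⟨a, ha⟩ := hex
    have key : ∀ p : {a : X // ¬ Acc (fun a b : X => gt b a) a},
        ∃ q : {a : X // ¬ Acc (fun a b : X => gt b a) a}, gt p.1 q.1 := by
      rintro ⟨a, ha⟩
      by_contra h
      push_neg at h
      exact ha (Acc.intro a fun b hb =>
        Classical.byContradiction fun hb' => h ⟨b, hb'⟩ hb)
    let f : ℕ → {a : X // ¬ Acc (fun a b : X => gt b a) a} :=
      fun n => Nat.rec ⟨a, ha⟩ (fun _ p => Classical.choose (key p)) n
    exact ⟨fun n => (f n).1, fun n => Classical.choose_spec (key (f n))⟩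
  have main : ∀ x : X, ∀ y y', SSeq R E x y → SSeq R E x y' →
      ∃ z, SSeq R E y z ∧ SSeq R E y' z := by
    intro x
    induction x using hwf.induction with
    | _ x IH =>
    intro y y' hy hy'
    rcases hy with hy | hy
    · exact ⟨y', eqv_seq (Relation.EqvGen.symm _ _ hy) hy', sseq_refl _⟩
    rcases hy' with hy' | hy'
    · exact ⟨y, sseq_refl _, eqv_seq (Relation.EqvGen.symm _ _ hy') (Or.inr hy)⟩
    obtain ⟨y1, hx1, h1y⟩ := Relation.TransGen.head'_iff.mp hy
    obtain ⟨y1', hx1', h1y'⟩ := Relation.TransGen.head'_iff.mp hy'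
    have hseq1 : SSeq R E y1 y := rtg_seq h1y
    have hseq1' : SSeq R E y1' y' := rtg_seq h1y'
    obtain ⟨n, c, hc0, hcn, hzig, hdom⟩ := hlocal x y1 y1' hx1 hx1'
    -- all points of the tame zigzag are joinable with its source
    have zig : ∀ i, i ≤ n → ∃ z, SSeq R E (c 0) z ∧ SSeq R E (c i) z := by
      intro i
      induction i with
      | zero => exact fun _ => ⟨c 0, sseq_refl _, sseq_refl _⟩
      | succ i ih =>
        intro hi
        obtain ⟨z, hz0, hzi⟩ := ih (by omega)
        rcases hzig i (by omega) with hstep | hstep | heqv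
        · obtain ⟨u, hu1, hu2⟩ :=
            IH (c i) (hdom i (by omega)) z (c (i + 1)) hzi (step_seq hstep)
          exact ⟨u, seq_trans hz0 hu1, hu2⟩
        · exact ⟨z, hz0, seq_trans (step_seq hstep) hzi⟩
        · exact ⟨z, hz0, eqv_seq (Relation.EqvGen.symm _ _ heqv) hzi⟩
    obtain ⟨z0, h0a, h0b⟩ := zig n le_rfl
    rw [hc0] at h0a
    rw [hcn] at h0b
    obtain ⟨z1, hz1a, hz1b⟩ := IH y1 (hcompat _ _ hx1) y z0 hseq1 h0a
    obtain ⟨z2, hz2a, hz2b⟩ :=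
      IH y1' (hcompat _ _ hx1') y' z1 hseq1' (seq_trans h0b hz1b)
    exact ⟨z2, seq_trans hz1a hz2b, hz2a⟩
  exact main
end

section
/- Branchwise tamed congruence lemma: Let S = (R, E) be an abstract rewriting system modulo on X, ≻ a preorder on X compatible with S, and T ⊆ S a sub-rewriting system. If (f, g) and (f', g') are S-branchings with the same source that are branchwise ≻-tamely (T, ≡)-congruent (i.e., (f, f') and (g, g') are each ≻-tamely T-congruent), then (f, g) is ≻-tamely (T, ≡)-congruent if and only if (f', g') is. -/
theorem ZigStep.symm' {X : Type*} {R E : X → X → Prop} {x y : X}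
    (h : ZigStep R E x y) : ZigStep R E y x := by
  rcases h with h | h | h
  · exact Or.inr (Or.inl h)
  · exact Or.inl h
  · exact Or.inr (Or.inr h.symm)

theorem Tamed.symm' {X : Type*} {R E : X → X → Prop} {gt : X → X → Prop} {x y y' : X}
    (h : Tamed R E gt x y y') : Tamed R E gt x y' y := by
  obtain ⟨n, c, h0, hn, hstep, hdom⟩ := h
  refine ⟨n, fun i => c (n - i), by simpa, by simpa, ?_, fun i hi => hdom _ (Nat.sub_le _ _)⟩
  intro i hi
  dsimp only
  have : n - i = (n - (i + 1)) + 1 := by omega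
  rw [this]
  exact (hstep _ (by omega)).symm'

theorem Tamed.trans' {X : Type*} {R E : X → X → Prop} {gt : X → X → Prop} {x y y' y'' : X}
    (h : Tamed R E gt x y y') (h' : Tamed R E gt x y' y'') : Tamed R E gt x y y'' := by
  obtain ⟨n, c, h0, hn, hstep, hdom⟩ := h
  obtain ⟨m, d, h0', hm', hstep', hdom'⟩ := h'
  refine ⟨n + m, fun i => if i ≤ n then c i else d (i - n), by simp [h0], ?_, ?_, ?_⟩
  · by_cases hm : m = 0
    · subst hm; simp only [Nat.add_zero, if_pos le_rfl, hn, ← h0']; exact hm'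
    · simp only [Nat.add_sub_cancel_left, if_neg (by omega : ¬ n + m ≤ n), hm']
  · intro i hi
    dsimp only
    by_cases h1 : i + 1 ≤ n
    · rw [if_pos (by omega), if_pos h1]; exact hstep _ (by omega)
    · by_cases h2 : i ≤ n
      · have hin : i = n := by omega
        rw [if_pos h2, if_neg h1, hin, hn, show n + 1 - n = 1 by omega, ← h0']
        exact hstep' 0 (by omega)
      · rw [if_neg h2, if_neg h1, show i + 1 - n = (i - n) + 1 by omega]
        exact hstep' _ (by omega)
  · intro i hi
    dsimp only
    by_cases h2 : i ≤ n
    · rw [if_pos h2]; exact hdom _ h2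
    · rw [if_neg h2]; exact hdom' _ (by omega)

/-- **Branchwise tamed congruence lemma.**
Let `S = (R, E)` be an abstract rewriting system modulo on `X`, `≻ = gt` a
preorder on `X` compatible with `S` and `E`-invariant, and `T ⊆ S` the
sub-rewriting system generated by `Rt ⊆ R`.  If the `S`-branchings with source
`x` and targets `(y_f, y_g)` resp. `(y_f', y_g')` are branchwise `≻`-tamely
`T`-congruent — i.e. `(y_f, y_f')` and `(y_g, y_g')` are each `≻`-tamely
`T`-congruent — then `(y_f, y_g)` is `≻`-tamely `T`-congruent if and only if
`(y_f', y_g')` is. -/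
theorem stmt6 {X : Type*} (R Rt E : X → X → Prop)
    (hsub : ∀ x y, Rt x y → R x y)
    (gt : X → X → Prop) (htrans : Transitive gt)
    (hEinv : ∀ x x' y y', Relation.EqvGen E x' x → gt x y → Relation.EqvGen E y y' →
      gt x' y')
    (hcompat : ∀ x y, SStep R E x y → gt x y)
    (x yf yg yf' yg' : X)
    (hf : SSeq R E x yf) (hg : SSeq R E x yg)
    (hf' : SSeq R E x yf') (hg' : SSeq R E x yg')
    (hbf : Tamed Rt E gt x yf yf') (hbg : Tamed Rt E gt x yg yg') :
    Tamed Rt E gt x yf yg ↔ Tamed Rt E gt x yf' yg' := by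
  constructor
  · intro h
    exact hbf.symm'.trans' (h.trans' hbg)
  · intro h
    exact hbf.trans' (h.trans' hbg.symm')
end

section
/- Church–Rosser for positive linear rewriting steps: Let S = (B; R, E) be a linear rewriting system modulo (R left-monomial and E-adapted, E monomial-invertible). If f is an S-rewriting step (not necessarily positive), then there exist positive S-rewriting steps g from s(f) and h from t(f), each of length at most one, with common target w, so that f factors as h⁻¹ ∘ g up to E-congruence. -/
variable {k : Type*} [CommRing k] {B : Type*}

/-- One generating step of the linear `E`-congruence on the free module
`B →₀ k`: a monomial-invertible relation `b → λ·b'` of `E`, applied linearly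
inside a vector. -/
def EStepV (Erel : B → B → kˣ → Prop) (u v : B →₀ k) : Prop :=
  ∃ (b b' : B) (lam : kˣ) (μ : k) (w : B →₀ k),
    Erel b b' lam ∧ u = w + μ • Finsupp.single b 1 ∧
      v = w + (μ * (lam : k)) • Finsupp.single b' 1

/-- The `E`-congruence `~_E` on the free module: the equivalence generated
linearly by the monomial-invertible relations of `E`. -/
def ECong (Erel : B → B → kˣ → Prop) : (B →₀ k) → (B →₀ k) → Prop :=
  Relation.EqvGen (EStepV Erel)

/-- Projective `E`-congruence of monomials: `b ~_E b'` up to an invertible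
scalar. -/
def ProjE (Erel : B → B → kˣ → Prop) (b b' : B) : Prop :=
  ∃ lam : kˣ, ECong Erel (Finsupp.single b (1 : k)) ((lam : k) • Finsupp.single b' 1)

/-- The `E`-projective support of a vector: all monomials projectively
`E`-congruent to a monomial of its ordinary support. -/
def SuppE (Erel : B → B → kˣ → Prop) (v : B →₀ k) : Set B :=
  {b | ∃ b' ∈ v.support, ProjE Erel b b'}

/-- An `S`-rewriting step of the linear rewriting system modulo `S = (R, E)`:
`u ~_E λ·s(r) + v → λ·t(r) + v ~_E w` for a relation `r : b → t` of `R` and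
`λ ≠ 0`. -/
def SStepL (Rrel : B → (B →₀ k) → Prop) (Erel : B → B → kˣ → Prop)
    (u w : B →₀ k) : Prop :=
  ∃ (b : B) (t : B →₀ k) (lam : k) (v : B →₀ k),
    lam ≠ 0 ∧ Rrel b t ∧
      ECong Erel u (lam • Finsupp.single b 1 + v) ∧
      ECong Erel (lam • t + v) w

/-- A positive `S`-rewriting step: moreover the rewritten monomial `s(r)` does
not occur, up to projective `E`-congruence, in the remainder `v`. -/
def PosStepL (Rrel : B → (B →₀ k) → Prop) (Erel : B → B → kˣ → Prop)
    (u w : B →₀ k) : Prop :=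
  ∃ (b : B) (t : B →₀ k) (lam : k) (v : B →₀ k),
    lam ≠ 0 ∧ Rrel b t ∧ b ∉ SuppE Erel v ∧
      ECong Erel u (lam • Finsupp.single b 1 + v) ∧
      ECong Erel (lam • t + v) w

section CRhelpers

variable {k : Type*} [CommRing k] {B : Type*} {Erel : B → B → kˣ → Prop}

lemma ECong.refl' (x : B →₀ k) : ECong Erel x x := Relation.EqvGen.refl x

lemma ECong.symm' {x y : B →₀ k} (h : ECong Erel x y) : ECong Erel y x :=
  Relation.EqvGen.symm _ _ h

lemma ECong.trans' {x y z : B →₀ k} (h1 : ECong Erel x y) (h2 : ECong Erel y z) :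
    ECong Erel x z := Relation.EqvGen.trans _ _ _ h1 h2

lemma ECong.add_right' {x y : B →₀ k} (h : ECong Erel x y) (z : B →₀ k) :
    ECong Erel (x + z) (y + z) := by
  induction h with
  | rel a b hab =>
    obtain ⟨b1, b2, lam, μ, w, hE, h1, h2⟩ := hab
    exact Relation.EqvGen.rel _ _
      ⟨b1, b2, lam, μ, w + z, hE, by rw [h1]; abel, by rw [h2]; abel⟩
  | refl x => exact Relation.EqvGen.refl _
  | symm x y _ ih => exact Relation.EqvGen.symm _ _ ih
  | trans x y z _ _ ih1 ih2 => exact Relation.EqvGen.trans _ _ _ ih1 ih2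

lemma ECong.add_left' {x y : B →₀ k} (h : ECong Erel x y) (z : B →₀ k) :
    ECong Erel (z + x) (z + y) := by
  rw [add_comm z x, add_comm z y]; exact h.add_right' z

lemma ECong.smul' {x y : B →₀ k} (c : k) (h : ECong Erel x y) :
    ECong Erel (c • x) (c • y) := by
  induction h with
  | rel a b hab =>
    obtain ⟨b1, b2, lam, μ, w, hE, h1, h2⟩ := hab
    refine Relation.EqvGen.rel _ _ ⟨b1, b2, lam, c * μ, c • w, hE, ?_, ?_⟩
    · rw [h1, smul_add, mul_smul]
    · rw [h2]; simp only [smul_add, mul_smul]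
  | refl x => exact Relation.EqvGen.refl _
  | symm x y _ ih => exact Relation.EqvGen.symm _ _ ih
  | trans x y z _ _ ih1 ih2 => exact Relation.EqvGen.trans _ _ _ ih1 ih2

lemma not_suppE_add {b : B} {x y : B →₀ k} (hx : b ∉ SuppE Erel x)
    (hy : b ∉ SuppE Erel y) : b ∉ SuppE Erel (x + y) := by
  classical
  rintro ⟨b1, hb1, hp⟩
  rcases Finset.mem_union.mp (Finsupp.support_add hb1) with h | h
  exacts [hx ⟨b1, h, hp⟩, hy ⟨b1, h, hp⟩]

lemma not_suppE_smul {b : B} {c : k} {x : B →₀ k} (hx : b ∉ SuppE Erel x) :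
    b ∉ SuppE Erel (c • x) := by
  rintro ⟨b1, hb1, hp⟩
  exact hx ⟨b1, Finsupp.support_smul hb1, hp⟩

lemma decompE (b : B) (v : B →₀ k) :
    ∃ (μ : k) (v' : B →₀ k),
      ECong Erel v (μ • Finsupp.single b 1 + v') ∧ b ∉ SuppE Erel v' := by
  induction v using Finsupp.induction with
  | zero =>
    refine ⟨0, 0, by rw [zero_smul, zero_add]; exact ECong.refl' 0, ?_⟩
    rintro ⟨b1, hb1, -⟩; simp at hb1
  | single_add a c f ha hc ih =>
    obtain ⟨μ, v', hcong, hb⟩ := ih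
    by_cases hp : ProjE Erel b a
    · obtain ⟨lam, hlam⟩ := hp
      -- single a c ~ (c * lam⁻¹) • single b 1
      have h1 : ECong Erel (Finsupp.single a (1 : k))
          (((lam⁻¹ : kˣ) : k) • Finsupp.single b 1) := by
        have := (hlam.smul' ((lam⁻¹ : kˣ) : k)).symm'
        have he : ((lam⁻¹ : kˣ) : k) • (lam : k) • Finsupp.single a (1 : k)
            = Finsupp.single a (1 : k) := by
          rw [← mul_smul, Units.inv_mul, one_smul]
        rwa [he] at this
      have h2 : ECong Erel (Finsupp.single a c)
          ((c * ((lam⁻¹ : kˣ) : k)) • Finsupp.single b 1) := by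
        have := h1.smul' c
        rwa [Finsupp.smul_single, smul_eq_mul, mul_one, ← mul_smul] at this
        -- goal after smul': ECong (c • single a 1) (c • (lam⁻¹ • single b 1))
      refine ⟨c * ((lam⁻¹ : kˣ) : k) + μ, v', ?_, hb⟩
      have step1 : ECong Erel (Finsupp.single a c + f)
          (Finsupp.single a c + (μ • Finsupp.single b 1 + v')) :=
        hcong.add_left' _
      have step2 : ECong Erel (Finsupp.single a c + (μ • Finsupp.single b 1 + v'))
          ((c * ((lam⁻¹ : kˣ) : k)) • Finsupp.single b 1 + (μ • Finsupp.single b 1 + v')) :=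
        h2.add_right' _
      have he : (c * ((lam⁻¹ : kˣ) : k)) • Finsupp.single b (1 : k)
            + (μ • Finsupp.single b 1 + v')
          = (c * ((lam⁻¹ : kˣ) : k) + μ) • Finsupp.single b 1 + v' := by
        rw [add_smul]; abel
      exact he ▸ step1.trans' step2
    · refine ⟨μ, Finsupp.single a c + v', ?_, ?_⟩
      · have := hcong.add_left' (Finsupp.single a c)
        have he : Finsupp.single a c + (μ • Finsupp.single b (1 : k) + v')
            = μ • Finsupp.single b 1 + (Finsupp.single a c + v') := by abel
        rwa [he] at this
      · refine not_suppE_add ?_ hb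
        rintro ⟨b1, hb1, hp1⟩
        have := Finsupp.support_single_subset hb1
        simp only [Finset.mem_singleton] at this
        exact hp (this ▸ hp1)

end CRhelpers

/-- **Church–Rosser property for positive linear rewriting steps.**
Let `S = (B; R, E)` be a linear rewriting system modulo: `E` monomial-invertible
and `R` left-monomial and `E`-adapted (`s(r)` not in the `E`-projective support
of `t(r)`).  If `f` is an `S`-rewriting step from `u` to `w'` (not necessarily
positive), then there exist positive `S`-rewriting steps `g` from `u` and `h`
from `w'`, each of length at most one (i.e. an `E`-congruence or a single
positive step), with common target `w`; hence `f` factors as `h⁻¹ ∘ g` up to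
`E`-congruence. -/
theorem stmt8 {k : Type*} [CommRing k] {B : Type*}
    (Rrel : B → (B →₀ k) → Prop) (Erel : B → B → kˣ → Prop)
    (hadapted : ∀ b t, Rrel b t → b ∉ SuppE Erel t) :
    ∀ u w' : B →₀ k, SStepL Rrel Erel u w' →
      ∃ w : B →₀ k,
        (ECong Erel u w ∨ PosStepL Rrel Erel u w) ∧
        (ECong Erel w' w ∨ PosStepL Rrel Erel w' w) := by
  rintro u w' ⟨b, t, lam, v, hlam, hR, hc1, hc2⟩
  obtain ⟨μ, v', hdec, hb⟩ := decompE (Erel := Erel) b v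
  refine ⟨(lam + μ) • t + v', ?_, ?_⟩
  · -- from u
    have hu : ECong Erel u ((lam + μ) • Finsupp.single b 1 + v') := by
      refine hc1.trans' ?_
      have := hdec.add_left' (lam • Finsupp.single b 1)
      have he : lam • Finsupp.single b (1 : k) + (μ • Finsupp.single b 1 + v')
          = (lam + μ) • Finsupp.single b 1 + v' := by
        rw [add_smul]; abel
      rwa [he] at this
    by_cases hz : lam + μ = 0
    · left
      have : ((lam + μ) • Finsupp.single b (1 : k) + v') = (lam + μ) • t + v' := by
        rw [hz, zero_smul, zero_smul]
      exact this ▸ hu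
    · right
      exact ⟨b, t, lam + μ, v', hz, hR, hb, hu, ECong.refl' _⟩
  · -- from w'
    have hw : ECong Erel w' (lam • t + (μ • Finsupp.single b 1 + v')) :=
      hc2.symm'.trans' (hdec.add_left' (lam • t))
    by_cases hz : μ = 0
    · left
      have he : lam • t + (μ • Finsupp.single b (1 : k) + v') = (lam + μ) • t + v' := by
        rw [hz, zero_smul, zero_add, add_smul, zero_smul, add_zero]
      exact he ▸ hw
    · right
      refine ⟨b, t, μ, lam • t + v', hz, hR, ?_, ?_, ?_⟩
      · exact not_suppE_add (not_suppE_smul (hadapted b t hR)) hb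
      · have he : lam • t + (μ • Finsupp.single b (1 : k) + v')
            = μ • Finsupp.single b 1 + (lam • t + v') := by abel
        exact he ▸ hw
      · have he : μ • t + (lam • t + v') = (lam + μ) • t + v' := by
          rw [add_smul]; abel
        exact he ▸ ECong.refl' _
end

section
/- Two vectors u, v in the free module on B are congruent via S-rewriting steps if and only if they are congruent via positive S-rewriting steps, if and only if their images in the quotient module ⟨B⟩_k / ⟨R ⊔ E⟩_k coincide. In particular, the equivalence relations generated by all S-rewriting steps and by positive S-rewriting steps agree. -/
variable {k : Type*} [CommRing k] {B : Type*}

/-- The submodule `⟨R ⊔ E⟩_k` of the free module `⟨B⟩_k`, generated by the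
differences `s(r) − t(r)` for the relations of `R` and `E`. -/
noncomputable def NSub (Rrel : B → (B →₀ k) → Prop) (Erel : B → B → kˣ → Prop) :
    Submodule k (B →₀ k) :=
  Submodule.span k
    ({x | ∃ b t, Rrel b t ∧ x = Finsupp.single b 1 - t} ∪
     {x | ∃ (b b' : B) (lam : kˣ), Erel b b' lam ∧
        x = Finsupp.single b (1 : k) - (lam : k) • Finsupp.single b' 1})

/-!
`E`-congruence is congruence modulo the span `ESub` of the `E`-relations, and every rewriting
step changes a vector by an element of `⟨R ⊔ E⟩_k`. Conversely, every generator of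
`⟨R ⊔ E⟩_k`, scaled and translated, is a single step, so congruence is membership of `u - v`.
A step `u ~_E λ s(r) + v → λ t(r) + v ~_E w` need not be positive, but splitting
`v ~_E c s(r) + g` with `s(r) ∉ SuppE g` makes both `u` and `w` rewrite positively to
`(λ + c) t(r) + g`; for `w` this is where `s(r) ∉ SuppE t(r)` is needed.
-/

open Relation

section Generic

variable {R M : Type*} [Ring R] [AddCommGroup M] [Module R M]

theorem Relation.EqvGen.sub_mem {N : Submodule R M} {r : M → M → Prop}
    (hr : ∀ a b, r a b → a - b ∈ N) {u v : M} (h : EqvGen r u v) : u - v ∈ N :=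
  N.quotientRel_def.1 <|
    EqvGen.eqvGen_le (r' := N.quotientRel) (fun a b hab => N.quotientRel_def.2 (hr a b hab)) u v h

theorem Relation.EqvGen.of_sub_mem_span {s : Set M} {r : M → M → Prop}
    (hs : ∀ g ∈ s, ∀ (c : R) (x : M), EqvGen r x (x + c • g)) {u v : M}
    (h : u - v ∈ Submodule.span R s) : EqvGen r u v := by
  have key : ∀ n ∈ Submodule.span R s, ∀ (c : R) (x : M), EqvGen r x (x + c • n) := by
    intro n hn
    induction hn using Submodule.span_induction with
    | mem g hg => exact hs g hg
    | zero => intro c x; simpa using EqvGen.refl x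
    | add n m _ _ ihn ihm =>
        intro c x
        simpa only [smul_add, add_assoc] using (ihn c x).trans _ _ _ (ihm c (x + c • n))
    | smul d n _ ih => intro c x; simpa only [smul_smul] using ih (c * d) x
  simpa using (key _ h 1 v).symm

end Generic

section ECongruence

variable {Erel : B → B → kˣ → Prop}

noncomputable def ESub (Erel : B → B → kˣ → Prop) : Submodule k (B →₀ k) :=
  Submodule.span k {x | ∃ (b b' : B) (lam : kˣ), Erel b b' lam ∧
    x = Finsupp.single b (1 : k) - (lam : k) • Finsupp.single b' 1}

theorem single_sub_smul_single_mem_ESub {b b' : B} {lam : kˣ} (he : Erel b b' lam) :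
    Finsupp.single b (1 : k) - (lam : k) • Finsupp.single b' 1 ∈ ESub Erel :=
  Submodule.subset_span ⟨b, b', lam, he, rfl⟩

theorem eCong_iff_sub_mem {u v : B →₀ k} : ECong Erel u v ↔ u - v ∈ ESub Erel := by
  refine ⟨EqvGen.sub_mem ?_, EqvGen.of_sub_mem_span ?_⟩
  · rintro _ _ ⟨b, b', lam, μ, w, he, rfl, rfl⟩
    convert Submodule.smul_mem _ μ (single_sub_smul_single_mem_ESub he) using 1
    module
  · rintro _ ⟨b, b', lam, he, rfl⟩ c x
    refine EqvGen.symm _ _ (EqvGen.rel _ _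
      ⟨b, b', lam, c, x - (c * (lam : k)) • Finsupp.single b' 1, he, ?_, ?_⟩) <;> module

theorem ECong.of_eq {u v : B →₀ k} (h : u = v) : ECong Erel u v := h ▸ EqvGen.refl u

theorem ESub_le_NSub (Rrel : B → (B →₀ k) → Prop) : ESub Erel ≤ NSub Rrel Erel :=
  Submodule.span_mono Set.subset_union_right

theorem suppE_add_subset (x y : B →₀ k) : SuppE Erel (x + y) ⊆ SuppE Erel x ∪ SuppE Erel y := by
  classical
  rintro b ⟨b', hb', hp⟩
  rcases Finset.mem_union.mp (Finsupp.support_add hb') with h | h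
  exacts [Or.inl ⟨b', h, hp⟩, Or.inr ⟨b', h, hp⟩]

theorem suppE_smul_subset (c : k) (x : B →₀ k) : SuppE Erel (c • x) ⊆ SuppE Erel x :=
  fun _ ⟨b', hb', hp⟩ => ⟨b', Finsupp.support_smul hb', hp⟩

theorem suppE_single_subset (a : B) (r : k) :
    SuppE Erel (Finsupp.single a r) ⊆ {b | ProjE Erel b a} := by
  rintro b ⟨b', hb', hp⟩
  rwa [Finset.mem_singleton.mp (Finsupp.support_single_subset hb')] at hp

variable (Erel) in
theorem exists_eCong_smul_single_add (b : B) (v : B →₀ k) :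
    ∃ (c : k) (g : B →₀ k), ECong Erel v (c • Finsupp.single b 1 + g) ∧
      b ∉ SuppE Erel g := by
  induction v using Finsupp.induction with
  | zero => exact ⟨0, 0, ECong.of_eq (by simp), fun ⟨_, hb', _⟩ => by simp at hb'⟩
  | single_add a r f _ _ ih =>
      obtain ⟨c, g, hfg, hg⟩ := ih
      rw [eCong_iff_sub_mem] at hfg
      by_cases hp : ProjE Erel b a
      · obtain ⟨lam, hlam⟩ := hp
        refine ⟨c + r * ((lam⁻¹ : kˣ) : k), g, eCong_iff_sub_mem.2 ?_, hg⟩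
        convert sub_mem hfg (Submodule.smul_mem _ (r * ((lam⁻¹ : kˣ) : k))
          (eCong_iff_sub_mem.1 hlam)) using 1
        rw [smul_sub, smul_smul, mul_assoc, Units.inv_mul, mul_one, Finsupp.smul_single_one a r]
        module
      · refine ⟨c, Finsupp.single a r + g, eCong_iff_sub_mem.2 ?_, fun hb => ?_⟩
        · convert hfg using 1; abel
        · rcases suppE_add_subset _ _ hb with h | h
          exacts [hp (suppE_single_subset a r h), hg h]

end ECongruence

section Rewriting

variable {Rrel : B → (B →₀ k) → Prop} {Erel : B → B → kˣ → Prop}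

theorem ECong.sub_mem_NSub {u v : B →₀ k} (h : ECong Erel u v) : u - v ∈ NSub Rrel Erel :=
  ESub_le_NSub Rrel (eCong_iff_sub_mem.1 h)

theorem SStepL.sub_mem_NSub {u w : B →₀ k} (h : SStepL Rrel Erel u w) :
    u - w ∈ NSub Rrel Erel := by
  obtain ⟨b, t, lam, v, _, hR, h1, h2⟩ := h
  have hgen : Finsupp.single b 1 - t ∈ NSub Rrel Erel :=
    Submodule.subset_span (Or.inl ⟨b, t, hR, rfl⟩)
  convert add_mem (add_mem h1.sub_mem_NSub (Submodule.smul_mem _ lam hgen)) h2.sub_mem_NSub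
    using 1
  module

theorem PosStepL.sStepL {u w : B →₀ k} (h : PosStepL Rrel Erel u w) : SStepL Rrel Erel u w :=
  let ⟨b, t, lam, v, hlam, hR, _, h1, h2⟩ := h
  ⟨b, t, lam, v, hlam, hR, h1, h2⟩

theorem eqvGen_sStepL_of_sub_mem {u v : B →₀ k} (h : u - v ∈ NSub Rrel Erel) :
    EqvGen (fun a c => SStepL Rrel Erel a c ∨ ECong Erel a c) u v := by
  refine EqvGen.of_sub_mem_span ?_ h
  rintro _ (⟨b, t, hR, rfl⟩ | ⟨b, b', lam, hE, rfl⟩) c x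
  · by_cases hc : c = 0
    · simpa [hc] using EqvGen.refl x
    · exact EqvGen.symm _ _ (EqvGen.rel _ _ (Or.inl ⟨b, t, c, x - c • t, hc, hR,
        ECong.of_eq (by module), ECong.of_eq (by module)⟩))
  · refine EqvGen.rel _ _ (Or.inr (eCong_iff_sub_mem.2 ?_))
    simpa using Submodule.smul_mem _ c (single_sub_smul_single_mem_ESub hE)

theorem eqvGen_posStepL_of_eCong {b : B} {t g u : B →₀ k} (a : k) (hR : Rrel b t)
    (hg : b ∉ SuppE Erel g) (hu : ECong Erel u (a • Finsupp.single b 1 + g)) :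
    EqvGen (fun a c => PosStepL Rrel Erel a c ∨ ECong Erel a c) u (a • t + g) := by
  by_cases ha : a = 0
  · subst ha
    exact EqvGen.rel _ _ (Or.inr (by simpa using hu))
  · exact EqvGen.rel _ _ (Or.inl ⟨b, t, a, g, ha, hR, hg, hu, EqvGen.refl _⟩)

theorem SStepL.eqvGen_posStepL (hadapted : ∀ b t, Rrel b t → b ∉ SuppE Erel t)
    {u w : B →₀ k} (h : SStepL Rrel Erel u w) :
    EqvGen (fun a c => PosStepL Rrel Erel a c ∨ ECong Erel a c) u w := by
  obtain ⟨b, t, lam, v, _, hR, h1, h2⟩ := h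
  obtain ⟨c, g, hvg, hg⟩ := exists_eCong_smul_single_add Erel b v
  rw [eCong_iff_sub_mem] at h1 h2 hvg
  have hu : ECong Erel u ((lam + c) • Finsupp.single b 1 + g) := by
    rw [eCong_iff_sub_mem]
    convert add_mem h1 hvg using 1
    module
  have hw : ECong Erel w (c • Finsupp.single b 1 + (lam • t + g)) := by
    rw [eCong_iff_sub_mem]
    convert sub_mem hvg h2 using 1
    module
  have hwg : b ∉ SuppE Erel (lam • t + g) := fun hb =>
    (suppE_add_subset _ _ hb).elim (fun ht => hadapted b t hR (suppE_smul_subset lam t ht)) hg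
  have hw' := eqvGen_posStepL_of_eCong c hR hwg hw
  rw [← add_assoc, ← add_smul, add_comm c] at hw'
  exact (eqvGen_posStepL_of_eCong (lam + c) hR hg hu).trans _ _ _ hw'.symm

end Rewriting

/-- **Congruence via rewriting steps, positive rewriting steps, and the
presented quotient module agree.**  For a linear rewriting system modulo
`S = (B; R, E)` (with `R` left-monomial and `E`-adapted, `E` monomial
invertible), two vectors `u, v` are congruent via `S`-rewriting steps iff they
are congruent via positive `S`-rewriting steps, iff their images in the
quotient module `⟨B⟩_k / ⟨R ⊔ E⟩_k` coincide (i.e. `u − v ∈ ⟨R ⊔ E⟩_k`).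
In particular the equivalence relations generated by all steps and by positive
steps agree. -/
theorem stmt9 {k : Type*} [CommRing k] {B : Type*}
    (Rrel : B → (B →₀ k) → Prop) (Erel : B → B → kˣ → Prop)
    (hadapted : ∀ b t, Rrel b t → b ∉ SuppE Erel t) :
    ∀ u v : B →₀ k,
      (Relation.EqvGen (fun a c => SStepL Rrel Erel a c ∨ ECong Erel a c) u v ↔
        u - v ∈ NSub Rrel Erel) ∧
      (Relation.EqvGen (fun a c => PosStepL Rrel Erel a c ∨ ECong Erel a c) u v ↔
        u - v ∈ NSub Rrel Erel) := by
  intro u v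
  have hstep : ∀ a c, SStepL Rrel Erel a c ∨ ECong Erel a c → a - c ∈ NSub Rrel Erel :=
    fun a c h => h.elim SStepL.sub_mem_NSub ECong.sub_mem_NSub
  have hpos : ∀ a c, SStepL Rrel Erel a c ∨ ECong Erel a c →
      EqvGen (fun a c => PosStepL Rrel Erel a c ∨ ECong Erel a c) a c :=
    fun a c h => h.elim (SStepL.eqvGen_posStepL hadapted) (fun he => EqvGen.rel _ _ (Or.inr he))
  refine ⟨⟨EqvGen.sub_mem hstep, eqvGen_sStepL_of_sub_mem⟩, ⟨EqvGen.sub_mem ?_, ?_⟩⟩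
  · exact fun a c h => hstep a c (h.imp_left PosStepL.sStepL)
  · exact fun h => EqvGen.eqvGen_le hpos u v (eqvGen_sStepL_of_sub_mem h)
end

section
/- Linearity of the induced order: Let S = (B; R, E) be a linear rewriting system modulo and ≻ an E-invariant relation on B with induced relation ≻⁺ on V = ⟨B⟩_k defined by u ≻⁺ v iff the E-projective supports differ and every monomial in supp_E(v) \ supp_E(u) is dominated by some monomial in supp_E(u) \ supp_E(v). If u ≻⁺ v, then λu + w ≻⁺ λv + w for every λ ∈ k \ {0} and every w ∈ V whose E-projective support is disjoint from that of u. -/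
variable {k : Type*} [CommRing k] {B : Type*}

/-- The set relation `≻^set` induced by `≻` on subsets of `B`. -/
def GTset {B : Type*} (gt : B → B → Prop) (M N : Set B) : Prop :=
  M ≠ N ∧ ∀ y ∈ N \ M, ∃ x ∈ M \ N, gt x y

/-- The relation `≻⁺` induced by `≻` on the free module, comparing
`E`-projective supports via the set extension of `≻`. -/
def GTplus (Erel : B → B → kˣ → Prop) (gt : B → B → Prop) (u v : B →₀ k) : Prop :=
  GTset gt (SuppE Erel u) (SuppE Erel v)

/-- **Linearity of the induced order.**
Let `k` be an integral domain, `E` monomial-invertible, and `≻ = gt` an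
`E`-invariant relation on the monomials `B`, with induced relation `≻⁺` on
`V = ⟨B⟩_k`.  If `u ≻⁺ v`, then `λ·u + w ≻⁺ λ·v + w` for every `λ ≠ 0` and
every vector `w` whose `E`-projective support is disjoint from that of `u`. -/
theorem stmt12 {k : Type*} [CommRing k] [IsDomain k] {B : Type*}
    (Erel : B → B → kˣ → Prop) (gt : B → B → Prop)
    (hEinv : ∀ a a' b b', ProjE Erel a a' → gt a b → ProjE Erel b b' → gt a' b')
    {u v : B →₀ k} (h : GTplus Erel gt u v) :
    ∀ lam : k, lam ≠ 0 → ∀ w : B →₀ k,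
      SuppE Erel u ∩ SuppE Erel w = ∅ →
      GTplus Erel gt (lam • u + w) (lam • v + w) := by
  intro lam hlam w hdisj
  obtain ⟨hne, hdom⟩ := h
  have refl_mem : ∀ (z : B →₀ k) (b : B), b ∈ z.support → b ∈ SuppE Erel z := by
    intro z b hb
    exact ⟨b, hb, 1, by
      have h0 : ECong Erel (Finsupp.single b (1 : k)) (Finsupp.single b 1) := Relation.EqvGen.refl _
      simpa using h0⟩
  have hdisj' : ∀ b, b ∈ SuppE Erel u → b ∉ SuppE Erel w := by
    intro b h1 h2
    have : b ∈ (SuppE Erel u ∩ SuppE Erel w) := ⟨h1, h2⟩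
    rw [hdisj] at this
    exact this
  set A := SuppE Erel u with hA
  set A' := SuppE Erel v with hA'
  set W := SuppE Erel w with hW
  set N := SuppE Erel (lam • v + w) with hNdef
  have hM : SuppE Erel (lam • u + w) = A ∪ W := by
    ext x
    constructor
    · rintro ⟨b', hb', hp⟩
      rw [Finsupp.mem_support_iff] at hb'
      by_cases hu : b' ∈ u.support
      · exact Or.inl ⟨b', hu, hp⟩
      · refine Or.inr ⟨b', ?_, hp⟩
        rw [Finsupp.mem_support_iff] at hu ⊢
        push_neg at hu
        intro hw0
        apply hb'
        simp [Finsupp.add_apply, Finsupp.smul_apply, hu, hw0]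
    · rintro (⟨b', hb', hp⟩ | ⟨b', hb', hp⟩)
      · refine ⟨b', ?_, hp⟩
        have hnw : b' ∉ w.support := fun hw =>
          hdisj' b' (refl_mem u b' hb') (refl_mem w b' hw)
        rw [Finsupp.mem_support_iff] at hb' hnw ⊢
        push_neg at hnw
        simp [Finsupp.add_apply, Finsupp.smul_apply, hnw, mul_ne_zero hlam hb']
      · refine ⟨b', ?_, hp⟩
        have hnu : b' ∉ u.support := fun hu =>
          hdisj' b' (refl_mem u b' hu) (refl_mem w b' hb')
        rw [Finsupp.mem_support_iff] at hb' hnu ⊢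
        push_neg at hnu
        simp [Finsupp.add_apply, Finsupp.smul_apply, hnu, hb']
  have hNsub : N ⊆ A' ∪ W := by
    rintro x ⟨b', hb', hp⟩
    rw [Finsupp.mem_support_iff] at hb'
    by_cases hv : b' ∈ v.support
    · exact Or.inl ⟨b', hv, hp⟩
    · refine Or.inr ⟨b', ?_, hp⟩
      rw [Finsupp.mem_support_iff] at hv ⊢
      push_neg at hv
      intro hw0
      exact hb' (by simp [Finsupp.add_apply, Finsupp.smul_apply, hv, hw0])
  have hA'N : ∀ x, x ∈ A' → x ∉ W → x ∈ N := by
    rintro x ⟨b', hb', hp⟩ hxw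
    refine ⟨b', ?_, hp⟩
    have hnw : b' ∉ w.support := fun hw => hxw ⟨b', hw, hp⟩
    rw [Finsupp.mem_support_iff] at hb' hnw ⊢
    push_neg at hnw
    simp [Finsupp.add_apply, Finsupp.smul_apply, hnw, mul_ne_zero hlam hb']
  have hWN : ∀ x, x ∈ W → x ∉ A' → x ∈ N := by
    rintro x ⟨b', hb', hp⟩ hxv
    refine ⟨b', ?_, hp⟩
    have hnv : b' ∉ v.support := fun hv => hxv ⟨b', hv, hp⟩
    rw [Finsupp.mem_support_iff] at hb' hnv ⊢
    push_neg at hnv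
    simp [Finsupp.add_apply, Finsupp.smul_apply, hnv, hb']
  -- auxiliary: an element of A \ A' gives a contradiction with A ∪ W = N
  have key : ∀ x, x ∈ A → x ∉ A' → A ∪ W = N → False := by
    intro x hxA hxA' heq
    have hxN : x ∈ N := heq ▸ Or.inl hxA
    rcases hNsub hxN with h1 | h2
    · exact hxA' h1
    · exact hdisj' x hxA h2
  constructor
  · rw [hM]
    intro heq
    obtain ⟨a, ha⟩ := Set.symmDiff_nonempty.mpr hne
    rw [Set.mem_symmDiff] at ha
    obtain ⟨haA, haA'⟩ | ⟨haA', haA⟩ := ha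
    · exact key a haA haA' heq
    · obtain ⟨x, ⟨hxA, hxA'⟩, _⟩ := hdom a ⟨haA', haA⟩
      exact key x hxA hxA' heq
  · rw [hM]
    rintro y ⟨hyN, hyM⟩
    have hyA : y ∉ A := fun hy => hyM (Or.inl hy)
    have hyW : y ∉ W := fun hy => hyM (Or.inr hy)
    have hyA' : y ∈ A' := by
      rcases hNsub hyN with h1 | h2
      · exact h1
      · exact absurd h2 hyW
    obtain ⟨x, ⟨hxA, hxA'⟩, hgt⟩ := hdom y ⟨hyA', hyA⟩
    refine ⟨x, ⟨Or.inl hxA, ?_⟩, hgt⟩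
    intro hxN
    rcases hNsub hxN with h1 | h2
    · exact hxA' h1
    · exact hdisj' x hxA h2
end
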